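/- arXiv:1808.00704 — 6 statements merged into one kernel-verified Lean document; each statement's English description precedes it below -/
import Mathlib

section
/- Let F, d_prev ∈ ℝⁿ with F ≠ 0, let F_prev ∈ ℝⁿ with F_prev ≠ 0, let y ∈ ℝⁿ, let t > 0, and let β = ⟨F, y⟩/‖F_prev‖² − t·(⟨F, d_prev⟩/‖F_prev‖⁴)·(⟨F, y⟩/‖F‖)². Let D be a diagonal matrix with entries 1/λ_i, 0 < ℓ ≤ λ_i ≤ u, and set d = −D F + β d_prev. If t > u/4 then ⟨F, d⟩ ≤ −(1/u − 1/(4t))·‖F‖². -/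
/-!
Expanding `d = -D F + β d_prev` gives `⟨F, d⟩ = -⟨F, D F⟩ + β ⟨F, d_prev⟩`. Since every entry of
`D` is at least `1/u`, the first term is at most `-‖F‖² / u`. Writing `s = ⟨F, y⟩⟨F, d_prev⟩ / ‖F_prev‖²`,
the second term is the concave quadratic `s - t s² / ‖F‖²`, whose maximum over `s` is `‖F‖² / (4t)`.
-/

open Finset

lemma sub_mul_sq_div_le_div {s t c : ℝ} (ht : 0 < t) (hc : 0 < c) :
    s - t * s ^ 2 / c ≤ c / (4 * t) := by
  have hgap : c / (4 * t) - (s - t * s ^ 2 / c) = (c - 2 * t * s) ^ 2 / (4 * t * c) := by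
    field_simp
    ring
  have : 0 ≤ (c - 2 * t * s) ^ 2 / (4 * t * c) := by positivity
  linarith

lemma prp_beta_mul_le {a b p f t : ℝ} (ht : 0 < t) (hf : f ≠ 0) :
    (a / p ^ 2 - t * (b / p ^ 4) * (a / f) ^ 2) * b ≤ f ^ 2 / (4 * t) := by
  have hs : (a / p ^ 2 - t * (b / p ^ 4) * (a / f) ^ 2) * b
      = a * b / p ^ 2 - t * (a * b / p ^ 2) ^ 2 / f ^ 2 := by
    ring
  rw [hs]
  exact sub_mul_sq_div_le_div ht (by positivity)

lemma norm_sq_div_le_inner_of_diag_inv {ι : Type*} [Fintype ι] {u : ℝ} {lam : ι → ℝ}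
    (hpos : ∀ i, 0 < lam i) (hle : ∀ i, lam i ≤ u) {F DF : EuclideanSpace ℝ ι}
    (hDF : ∀ i, DF i = (lam i)⁻¹ * F i) :
    ‖F‖ ^ 2 / u ≤ inner ℝ F DF := by
  rw [← real_inner_self_eq_norm_sq]
  simp only [PiLp.inner_apply, RCLike.inner_apply, conj_trivial, hDF, sum_div]
  refine sum_le_sum fun i _ => ?_
  have hinv : u⁻¹ ≤ (lam i)⁻¹ := inv_anti₀ (hpos i) (hle i)
  have := mul_le_mul_of_nonneg_left hinv (mul_self_nonneg (F i))
  rw [div_eq_mul_inv]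
  linarith

theorem prp_sufficient_descent_general (n : ℕ) (ℓ u t : ℝ) (hℓ : 0 < ℓ) (hℓu : ℓ ≤ u)
    (ht : u / 4 < t)
    (lam : Fin n → ℝ) (hlow : ∀ i, ℓ ≤ lam i) (hhigh : ∀ i, lam i ≤ u)
    (F Fp y dp DF d : EuclideanSpace ℝ (Fin n)) (hF : F ≠ 0)
    (hDF : ∀ i, DF i = (lam i)⁻¹ * F i)
    (β : ℝ)
    (hβ : β = (inner ℝ (F) (y) : ℝ) / ‖Fp‖ ^ 2 -
      t * ((inner ℝ (F) (dp) : ℝ) / ‖Fp‖ ^ 4) * ((inner ℝ (F) (y) : ℝ) / ‖F‖) ^ 2)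
    (hd : d = -DF + β • dp) :
    (inner ℝ (F) (d) : ℝ) ≤ -(1 / u - 1 / (4 * t)) * ‖F‖ ^ 2 := by
  have hu : 0 < u := hℓ.trans_le hℓu
  have ht₀ : 0 < t := by linarith
  have hDiag : ‖F‖ ^ 2 / u ≤ inner ℝ F DF :=
    norm_sq_div_le_inner_of_diag_inv (fun i => hℓ.trans_le (hlow i)) hhigh hDF
  have hBeta : β * inner ℝ F dp ≤ ‖F‖ ^ 2 / (4 * t) :=
    hβ ▸ prp_beta_mul_le ht₀ (norm_ne_zero_iff.mpr hF)
  calc inner ℝ F d = -inner ℝ F DF + β * inner ℝ F dp := by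
        rw [hd, inner_add_right, inner_neg_right, real_inner_smul_right]
    _ ≤ -(‖F‖ ^ 2 / u) + ‖F‖ ^ 2 / (4 * t) := by linarith
    _ = -(1 / u - 1 / (4 * t)) * ‖F‖ ^ 2 := by ring

theorem prp_sufficient_descent (n : ℕ) (ℓ u t : ℝ) (hℓ : 0 < ℓ) (hℓu : ℓ ≤ u)
    (ht : u / 4 < t)
    (lam : Fin n → ℝ) (hlow : ∀ i, ℓ ≤ lam i) (hhigh : ∀ i, lam i ≤ u)
    (F Fp y dp DF d : EuclideanSpace ℝ (Fin n)) (hF : F ≠ 0) (hFp : Fp ≠ 0)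
    (hDF : ∀ i, DF i = (lam i)⁻¹ * F i)
    (β : ℝ)
    (hβ : β = (inner ℝ (F) (y) : ℝ) / ‖Fp‖ ^ 2 -
      t * ((inner ℝ (F) (dp) : ℝ) / ‖Fp‖ ^ 4) * ((inner ℝ (F) (y) : ℝ) / ‖F‖) ^ 2)
    (hd : d = -DF + β • dp) :
    (inner ℝ (F) (d) : ℝ) ≤ -(1 / u - 1 / (4 * t)) * ‖F‖ ^ 2 :=
  prp_sufficient_descent_general n ℓ u t hℓ hℓu ht lam hlow hhigh F Fp y dp DF d hF hDF β hβ hd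
end

section
/- Let F, F_prev, y, d_prev ∈ ℝⁿ with ‖F_prev‖ ≥ ε > 0, and suppose |⟨F, y⟩|·‖d_prev‖ < μ·‖F‖ for some μ > 0. Let D be diagonal with entries 1/λ_i, ℓ ≤ λ_i ≤ u, t > 0, β₊ = max{0, ⟨F,y⟩/‖F_prev‖² − t·(⟨F,d_prev⟩/‖F_prev‖⁴)·(⟨F,y⟩/‖F‖)²} and d = −D F + β₊ d_prev. Then ‖d‖ ≤ (√n/ℓ + μ/ε² + t μ²/ε⁴)·‖F‖. -/
/-!
Split `d = -DF + β₊ dp`. Since every entry of `D` is at most `1 / ℓ`, `‖DF‖ ≤ ‖F‖ / ℓ`.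
The coefficient `β₊` is bounded by the absolute values of its two terms; the hypothesis
`|⟨F, y⟩| ‖dp‖ < μ ‖F‖` bounds the first term times `‖dp‖` directly, and together with
Cauchy–Schwarz `|⟨F, dp⟩| ≤ ‖F‖ ‖dp‖` it bounds the second through
`‖F‖ (|⟨F, y⟩| ‖dp‖)² ≤ μ² ‖F‖³`.
-/

open scoped RealInnerProductSpace

theorem EuclideanSpace.norm_le_mul_norm_of_abs_le {ι : Type*} [Fintype ι]
    {x y : EuclideanSpace ℝ ι} {c : ℝ} (hc : 0 ≤ c) (h : ∀ i, |x i| ≤ c * |y i|) :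
    ‖x‖ ≤ c * ‖y‖ := by
  refine le_of_sq_le_sq ?_ (by positivity)
  rw [mul_pow, EuclideanSpace.real_norm_sq_eq, EuclideanSpace.real_norm_sq_eq, Finset.mul_sum]
  gcongr with i
  rw [← mul_pow]
  exact sq_le_sq.mpr (by rw [abs_mul, abs_of_nonneg hc]; exact h i)

theorem EuclideanSpace.norm_diag_inv_le {ι : Type*} [Fintype ι] {ℓ : ℝ} {lam : ι → ℝ}
    (hℓ : 0 < ℓ) (hlow : ∀ i, ℓ ≤ lam i) {x Dx : EuclideanSpace ℝ ι}
    (hDx : ∀ i, Dx i = (lam i)⁻¹ * x i) : ‖Dx‖ ≤ ℓ⁻¹ * ‖x‖ := by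
  refine EuclideanSpace.norm_le_mul_norm_of_abs_le (by positivity) fun i => ?_
  have hlam : 0 < lam i := hℓ.trans_le (hlow i)
  rw [hDx, abs_mul, abs_of_pos (inv_pos.mpr hlam)]
  gcongr
  exact hlow i

section PRP

variable {E : Type*} [NormedAddCommGroup E] [InnerProductSpace ℝ E]

noncomputable def prpBetaPlus (t : ℝ) (F Fp y dp : E) : ℝ :=
  max 0 (⟪F, y⟫ / ‖Fp‖ ^ 2 - t * (⟪F, dp⟫ / ‖Fp‖ ^ 4) * (⟪F, y⟫ / ‖F‖) ^ 2)

variable {t ε μ : ℝ} {F Fp y dp : E}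

theorem prpBetaPlus_nonneg : 0 ≤ prpBetaPlus t F Fp y dp := le_max_left _ _

theorem prpBetaPlus_le (ht : 0 ≤ t) :
    prpBetaPlus t F Fp y dp ≤
      |⟪F, y⟫| / ‖Fp‖ ^ 2 + t * |⟪F, dp⟫| * |⟪F, y⟫| ^ 2 / (‖Fp‖ ^ 4 * ‖F‖ ^ 2) := by
  refine max_le (by positivity) ?_
  have h₁ : ⟪F, y⟫ / ‖Fp‖ ^ 2 ≤ |⟪F, y⟫| / ‖Fp‖ ^ 2 := by gcongr; exact le_abs_self _
  have h₂ : -(t * (⟪F, dp⟫ / ‖Fp‖ ^ 4) * (⟪F, y⟫ / ‖F‖) ^ 2) ≤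
      t * |⟪F, dp⟫| * |⟪F, y⟫| ^ 2 / (‖Fp‖ ^ 4 * ‖F‖ ^ 2) := by
    rw [sq_abs]
    calc _ = t * -⟪F, dp⟫ * ⟪F, y⟫ ^ 2 / (‖Fp‖ ^ 4 * ‖F‖ ^ 2) := by ring
      _ ≤ _ := by gcongr; exact neg_le_abs _
  linarith

theorem prpBetaPlus_mul_norm_le (ht : 0 ≤ t) (hε : 0 < ε) (hFp : ε ≤ ‖Fp‖) (hF : 0 < ‖F‖)
    (hsmall : |⟪F, y⟫| * ‖dp‖ ≤ μ * ‖F‖) :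
    prpBetaPlus t F Fp y dp * ‖dp‖ ≤ (μ / ε ^ 2 + t * μ ^ 2 / ε ^ 4) * ‖F‖ := by
  have hμ : 0 ≤ μ := nonneg_of_mul_nonneg_left ((by positivity : (0:ℝ) ≤ _).trans hsmall) hF
  have hcubic : |⟪F, dp⟫| * |⟪F, y⟫| ^ 2 * ‖dp‖ ≤ μ ^ 2 * ‖F‖ ^ 3 :=
    calc |⟪F, dp⟫| * |⟪F, y⟫| ^ 2 * ‖dp‖
        ≤ ‖F‖ * ‖dp‖ * |⟪F, y⟫| ^ 2 * ‖dp‖ := by gcongr; exact abs_real_inner_le_norm F dp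
      _ = ‖F‖ * (|⟪F, y⟫| * ‖dp‖) ^ 2 := by ring
      _ ≤ ‖F‖ * (μ * ‖F‖) ^ 2 := by gcongr
      _ = μ ^ 2 * ‖F‖ ^ 3 := by ring
  calc prpBetaPlus t F Fp y dp * ‖dp‖
      ≤ (|⟪F, y⟫| / ‖Fp‖ ^ 2 + t * |⟪F, dp⟫| * |⟪F, y⟫| ^ 2 / (‖Fp‖ ^ 4 * ‖F‖ ^ 2)) * ‖dp‖ := by
        gcongr; exact prpBetaPlus_le ht
    _ = |⟪F, y⟫| * ‖dp‖ / ‖Fp‖ ^ 2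
          + t * (|⟪F, dp⟫| * |⟪F, y⟫| ^ 2 * ‖dp‖) / (‖Fp‖ ^ 4 * ‖F‖ ^ 2) := by ring
    _ ≤ μ * ‖F‖ / ε ^ 2 + t * (μ ^ 2 * ‖F‖ ^ 3) / (ε ^ 4 * ‖F‖ ^ 2) := by gcongr
    _ = (μ / ε ^ 2 + t * μ ^ 2 / ε ^ 4) * ‖F‖ := by field_simp

end PRP

theorem prp_direction_bound_general (n : ℕ) (ℓ t ε μ : ℝ) (hℓ : 0 < ℓ)
    (ht : 0 < t) (hε : 0 < ε)
    (lam : Fin n → ℝ) (hlow : ∀ i, ℓ ≤ lam i)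
    (F Fp y dp DF d : EuclideanSpace ℝ (Fin n))
    (hFp : ε ≤ ‖Fp‖)
    (hDF : ∀ i, DF i = (lam i)⁻¹ * F i)
    (hsmall : |(inner ℝ (F) (y) : ℝ)| * ‖dp‖ < μ * ‖F‖)
    (βp : ℝ)
    (hβp : βp = max 0 ((inner ℝ (F) (y) : ℝ) / ‖Fp‖ ^ 2 -
      t * ((inner ℝ (F) (dp) : ℝ) / ‖Fp‖ ^ 4) * ((inner ℝ (F) (y) : ℝ) / ‖F‖) ^ 2))
    (hd : d = -DF + βp • dp) :
    ‖d‖ ≤ (Real.sqrt n / ℓ + μ / ε ^ 2 + t * μ ^ 2 / ε ^ 4) * ‖F‖ := by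
  have hμF : 0 < μ * ‖F‖ := (by positivity : (0 : ℝ) ≤ |⟪F, y⟫| * ‖dp‖).trans_lt hsmall
  have hF : 0 < ‖F‖ := pos_of_mul_pos_right hμF (pos_of_mul_pos_left hμF (norm_nonneg F)).le
  have hn : 1 ≤ Real.sqrt n := by
    refine Real.one_le_sqrt.mpr (Nat.one_le_cast.mpr (Nat.pos_of_ne_zero ?_))
    rintro rfl
    exact hF.ne' (by simp [Subsingleton.elim F 0])
  have hβ : βp = prpBetaPlus t F Fp y dp := hβp
  have hDFle : ‖DF‖ ≤ Real.sqrt n / ℓ * ‖F‖ :=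
    calc ‖DF‖ ≤ 1 / ℓ * ‖F‖ := by
          rw [one_div]; exact EuclideanSpace.norm_diag_inv_le hℓ hlow hDF
      _ ≤ Real.sqrt n / ℓ * ‖F‖ := by gcongr
  calc ‖d‖ ≤ ‖DF‖ + βp * ‖dp‖ := by
        have := norm_add_le (-DF) (βp • dp)
        rwa [norm_neg, norm_smul, Real.norm_of_nonneg (hβ ▸ prpBetaPlus_nonneg), ← hd] at this
    _ ≤ Real.sqrt n / ℓ * ‖F‖ + (μ / ε ^ 2 + t * μ ^ 2 / ε ^ 4) * ‖F‖ :=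
        add_le_add hDFle (hβ ▸ prpBetaPlus_mul_norm_le ht.le hε hFp hF hsmall.le)
    _ = (Real.sqrt n / ℓ + μ / ε ^ 2 + t * μ ^ 2 / ε ^ 4) * ‖F‖ := by ring

theorem prp_direction_bound (n : ℕ) (ℓ u t ε μ : ℝ) (hℓ : 0 < ℓ) (hℓu : ℓ ≤ u)
    (ht : 0 < t) (hε : 0 < ε) (hμ : 0 < μ)
    (lam : Fin n → ℝ) (hlow : ∀ i, ℓ ≤ lam i) (hhigh : ∀ i, lam i ≤ u)
    (F Fp y dp DF d : EuclideanSpace ℝ (Fin n)) (hF : F ≠ 0)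
    (hFp : ε ≤ ‖Fp‖)
    (hDF : ∀ i, DF i = (lam i)⁻¹ * F i)
    (hsmall : |(inner ℝ (F) (y) : ℝ)| * ‖dp‖ < μ * ‖F‖)
    (βp : ℝ)
    (hβp : βp = max 0 ((inner ℝ (F) (y) : ℝ) / ‖Fp‖ ^ 2 -
      t * ((inner ℝ (F) (dp) : ℝ) / ‖Fp‖ ^ 4) * ((inner ℝ (F) (y) : ℝ) / ‖F‖) ^ 2))
    (hd : d = -DF + βp • dp) :
    ‖d‖ ≤ (Real.sqrt n / ℓ + μ / ε ^ 2 + t * μ ^ 2 / ε ^ 4) * ‖F‖ :=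
  prp_direction_bound_general n ℓ t ε μ hℓ ht hε lam hlow F Fp y dp DF d hFp hDF hsmall βp hβp hd
end

section
/- Let F : ℝⁿ → ℝⁿ be continuous, x, d ∈ ℝⁿ with ⟨F(x), d⟩ < 0, and let σ > 0, β > 0, ρ ∈ (0,1). Then there exists m ∈ ℕ such that ⟨F(x + β ρ^m d), d⟩ ≤ −σ β ρ^m ‖F(x + β ρ^m d)‖ ‖d‖². (Well-definedness of the DPPM line search.) -/
open Filter Topology

/-- At `t = 0` the left-hand side is `⟪F x, d⟫ < 0` while the right-hand side vanishes, and both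
sides are continuous in `t`. -/
theorem eventually_inner_le_neg_mul_norm_mul_norm_sq {E : Type*} [NormedAddCommGroup E]
    [InnerProductSpace ℝ E] {F : E → E} {x d : E} (hF : ContinuousAt F x)
    (hdesc : inner ℝ (F x) d < 0) (σ : ℝ) :
    ∀ᶠ t in 𝓝 (0 : ℝ), inner ℝ (F (x + t • d)) d ≤ -σ * t * ‖F (x + t • d)‖ * ‖d‖ ^ 2 := by
  have hFt : ContinuousAt (fun t : ℝ => F (x + t • d)) 0 :=
    ContinuousAt.comp (by simpa using hF) (by fun_prop)
  have hgap : ContinuousAt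
      (fun t : ℝ => inner ℝ (F (x + t • d)) d + σ * t * ‖F (x + t • d)‖ * ‖d‖ ^ 2) 0 :=
    (hFt.inner continuousAt_const).add
      (((continuousAt_const.mul continuousAt_id).mul hFt.norm).mul continuousAt_const)
  have hgap0 : inner ℝ (F (x + (0 : ℝ) • d)) d + σ * 0 * ‖F (x + (0 : ℝ) • d)‖ * ‖d‖ ^ 2 < 0 := by
    simpa using hdesc
  filter_upwards [hgap.eventually_lt_const hgap0] with t ht
  linarith

theorem line_search_well_defined_general (n : ℕ)
    (F : EuclideanSpace ℝ (Fin n) → EuclideanSpace ℝ (Fin n)) (hF : Continuous F)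
    (x d : EuclideanSpace ℝ (Fin n)) (hdesc : (inner ℝ (F x) (d) : ℝ) < 0)
    (σ β ρ : ℝ) (hρ : ρ ∈ Set.Ioo (0 : ℝ) 1) :
    ∃ m : ℕ, (inner ℝ (F (x + (β * ρ ^ m) • d)) (d) : ℝ) ≤
      -σ * (β * ρ ^ m) * ‖F (x + (β * ρ ^ m) • d)‖ * ‖d‖ ^ 2 := by
  have hstep : Tendsto (fun m : ℕ => β * ρ ^ m) atTop (𝓝 0) := by
    simpa using (tendsto_pow_atTop_nhds_zero_of_lt_one hρ.1.le hρ.2).const_mul β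
  obtain ⟨m, hm⟩ :=
    (hstep.eventually (eventually_inner_le_neg_mul_norm_mul_norm_sq hF.continuousAt hdesc σ)).exists
  exact ⟨m, hm⟩

theorem line_search_well_defined (n : ℕ)
    (F : EuclideanSpace ℝ (Fin n) → EuclideanSpace ℝ (Fin n)) (hF : Continuous F)
    (x d : EuclideanSpace ℝ (Fin n)) (hdesc : (inner ℝ (F x) (d) : ℝ) < 0)
    (σ β ρ : ℝ) (hσ : 0 < σ) (hβ : 0 < β) (hρ : ρ ∈ Set.Ioo (0 : ℝ) 1) :
    ∃ m : ℕ, (inner ℝ (F (x + (β * ρ ^ m) • d)) (d) : ℝ) ≤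
      -σ * (β * ρ ^ m) * ‖F (x + (β * ρ ^ m) • d)‖ * ‖d‖ ^ 2 :=
  line_search_well_defined_general n F hF x d hdesc σ β ρ hρ
end

section
/- Let F : ℝⁿ → ℝⁿ be monotone, i.e. ⟨F(x) − F(y), x − y⟩ ≥ 0 for all x, y. Suppose x, z ∈ ℝⁿ satisfy ⟨F(z), x − z⟩ > 0 and let x* be any zero of F. Then the hyperplane projection point x⁺ = x − (⟨x − z, F(z)⟩/‖F(z)‖²)·F(z) satisfies ‖x⁺ − x*‖² ≤ ‖x − x*‖² − ‖x⁺ − x‖², in particular ‖x⁺ − x*‖ ≤ ‖x − x*‖. -/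
open RealInnerProductSpace

variable {E : Type*} [NormedAddCommGroup E] [InnerProductSpace ℝ E]

/-- The projection of `x` onto the hyperplane `{w | ⟪v, w - z⟫ = 0}` (equal to `x` when `v = 0`). -/
noncomputable def hyperplaneProj (v z x : E) : E :=
  x - (⟪x - z, v⟫ / ‖v‖ ^ 2) • v

theorem inner_hyperplaneProj_sub_eq_zero {v : E} (hv : v ≠ 0) (z x : E) :
    ⟪v, hyperplaneProj v z x - z⟫ = 0 := by
  have hv2 : ‖v‖ ^ 2 ≠ 0 := by positivity
  rw [hyperplaneProj, sub_right_comm, inner_sub_right, real_inner_smul_right,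
    real_inner_self_eq_norm_sq, div_mul_cancel₀ _ hv2, real_inner_comm, sub_self]

theorem norm_hyperplaneProj_sub_sq_le {v z x y : E} (hx : 0 ≤ ⟪v, x - z⟫)
    (hy : ⟪v, y - z⟫ ≤ 0) :
    ‖hyperplaneProj v z x - y‖ ^ 2 ≤ ‖x - y‖ ^ 2 - ‖hyperplaneProj v z x - x‖ ^ 2 := by
  rcases eq_or_ne v 0 with rfl | hv
  · simp [hyperplaneProj]
  set p := hyperplaneProj v z x
  set t := ⟪x - z, v⟫ / ‖v‖ ^ 2
  have ht : 0 ≤ t := div_nonneg (real_inner_comm v (x - z) ▸ hx) (by positivity)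
  have hstep : x - p = t • v := by simp only [p, hyperplaneProj, sub_sub_cancel, t]
  -- `p - y = (p - z) - (y - z)` and `p - z` is orthogonal to `v`
  have hcross : 0 ≤ ⟪x - p, p - y⟫ := by
    have hpy : ⟪v, p - y⟫ = -⟪v, y - z⟫ := by
      rw [← sub_sub_sub_cancel_right p y z, inner_sub_right,
        inner_hyperplaneProj_sub_eq_zero hv, zero_sub]
    rw [hstep, real_inner_smul_left, hpy]
    exact mul_nonneg ht (neg_nonneg.mpr hy)
  have hsplit : ‖x - y‖ ^ 2 = ‖x - p‖ ^ 2 + 2 * ⟪x - p, p - y⟫ + ‖p - y‖ ^ 2 := by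
    rw [← norm_add_sq_real, sub_add_sub_cancel]
  rw [hsplit, norm_sub_rev p x]
  linarith

theorem norm_hyperplaneProj_sub_le {v z x y : E} (hx : 0 ≤ ⟪v, x - z⟫)
    (hy : ⟪v, y - z⟫ ≤ 0) : ‖hyperplaneProj v z x - y‖ ≤ ‖x - y‖ := by
  have h := norm_hyperplaneProj_sub_sq_le hx hy
  exact pow_le_pow_iff_left₀ (norm_nonneg _) (norm_nonneg _) two_ne_zero |>.mp
    (h.trans (sub_le_self _ (sq_nonneg _)))

theorem inner_sub_nonpos_of_monotone_of_eq_zero {F : E → E}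
    (hmono : ∀ x y, 0 ≤ ⟪F x - F y, x - y⟫) {xstar : E} (hstar : F xstar = 0) (z : E) :
    ⟪F z, xstar - z⟫ ≤ 0 := by
  have h := hmono z xstar
  rw [hstar, sub_zero, ← neg_sub, inner_neg_right] at h
  linarith

theorem hyperplane_projection_fejer_general (n : ℕ)
    (F : EuclideanSpace ℝ (Fin n) → EuclideanSpace ℝ (Fin n))
    (hmono : ∀ x y, 0 ≤ (inner ℝ (F x - F y) (x - y) : ℝ))
    (x z xstar : EuclideanSpace ℝ (Fin n))
    (hpos : 0 < (inner ℝ (F z) (x - z) : ℝ)) (hstar : F xstar = 0)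
    (xplus : EuclideanSpace ℝ (Fin n))
    (hxplus : xplus = x - ((inner ℝ (x - z) (F z) : ℝ) / ‖F z‖ ^ 2) • F z) :
    ‖xplus - xstar‖ ^ 2 ≤ ‖x - xstar‖ ^ 2 - ‖xplus - x‖ ^ 2 ∧
      ‖xplus - xstar‖ ≤ ‖x - xstar‖ := by
  have hproj : xplus = hyperplaneProj (F z) z x := hxplus
  have hstar_side := inner_sub_nonpos_of_monotone_of_eq_zero hmono hstar z
  subst hproj
  exact ⟨norm_hyperplaneProj_sub_sq_le hpos.le hstar_side,
    norm_hyperplaneProj_sub_le hpos.le hstar_side⟩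

theorem hyperplane_projection_fejer (n : ℕ)
    (F : EuclideanSpace ℝ (Fin n) → EuclideanSpace ℝ (Fin n))
    (hmono : ∀ x y, 0 ≤ (inner ℝ (F x - F y) (x - y) : ℝ))
    (x z xstar : EuclideanSpace ℝ (Fin n))
    (hFz : F z ≠ 0) (hpos : 0 < (inner ℝ (F z) (x - z) : ℝ)) (hstar : F xstar = 0)
    (xplus : EuclideanSpace ℝ (Fin n))
    (hxplus : xplus = x - ((inner ℝ (x - z) (F z) : ℝ) / ‖F z‖ ^ 2) • F z) :
    ‖xplus - xstar‖ ^ 2 ≤ ‖x - xstar‖ ^ 2 - ‖xplus - x‖ ^ 2 ∧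
      ‖xplus - xstar‖ ≤ ‖x - xstar‖ :=
  hyperplane_projection_fejer_general n F hmono x z xstar hpos hstar xplus hxplus
end

section
/- Under monotonicity of F and ⟨F(z_k), x_k − z_k⟩ ≥ σ α_k² ‖F(z_k)‖·‖d_k‖² (consequence of the line search with z_k = x_k + α_k d_k), the projection step x_{k+1} = P_Ω[x_k − ξ_k F(x_k_half)] with ξ_k = ⟨x_k − z_k, F(z_k)⟩/‖F(z_k)‖² and any solution x* ∈ Ω of F(x*) = 0 satisfies ‖x_{k+1} − x*‖² ≤ ‖x_k − x*‖² − σ² α_k⁴ ‖d_k‖⁴. Consequently the sequence {‖x_k − x*‖} is nonincreasing, {x_k} is bounded, and Σ_k α_k⁴ ‖d_k‖⁴ < ∞, so α_k‖d_k‖ → 0. -/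
/-!
The point `x - (⟪x - z, F z⟫ / ‖F z‖²) • F z` is the orthogonal projection of `x` onto the
hyperplane `{u | ⟪F z, u - z⟫ = 0}`. Monotonicity of `F` and `F x* = 0` put `x*` in the half-space
`⟪F z, u - z⟫ ≤ 0`, while the line search puts `x` in the opposite one, so this projection lowers
`‖x - x*‖²` by at least the squared distance `⟪x - z, F z⟫² / ‖F z‖²` from `x` to the hyperplane,
which the line search bounds below by `σ² α⁴ ‖d‖⁴`; projecting onto the convex set `Ω ∋ x*` does
not increase the distance to `x*`. Telescoping these decreases gives boundedness and summability.
-/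

open Filter InnerProductSpace

section InnerProductSpace

variable {E : Type*} [NormedAddCommGroup E] [InnerProductSpace ℝ E]

theorem norm_sub_le_of_forall_norm_sub_le {s : Set E} (hs : Convex ℝ s) {v p w : E}
    (hp : p ∈ s) (hmin : ∀ u ∈ s, ‖p - v‖ ≤ ‖u - v‖) (hw : w ∈ s) : ‖p - w‖ ≤ ‖v - w‖ := by
  have hinf : ‖v - p‖ = ⨅ u : s, ‖v - u‖ := by
    have : Nonempty s := ⟨⟨p, hp⟩⟩
    refine le_antisymm (le_ciInf fun u => ?_)
      (ciInf_le (f := fun u : s => ‖v - u‖) ⟨0, ?_⟩ ⟨p, hp⟩)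
    · simpa only [norm_sub_rev v] using hmin u u.2
    · rintro _ ⟨u, rfl⟩
      exact norm_nonneg _
  have hvar : ⟪v - p, w - p⟫_ℝ ≤ 0 := (norm_eq_iInf_iff_real_inner_le_zero hs hp).mp hinf w hw
  have hexpand : ‖v - w‖ ^ 2 = ‖v - p‖ ^ 2 - 2 * ⟪v - p, w - p⟫_ℝ + ‖w - p‖ ^ 2 := by
    rw [← norm_sub_sq_real, sub_sub_sub_cancel_right]
  refine (sq_le_sq₀ (norm_nonneg _) (norm_nonneg _)).mp ?_
  rw [norm_sub_rev p, hexpand]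
  linarith [sq_nonneg ‖v - p‖]

theorem norm_sub_div_smul_sub_sq_le {x y g : E} {c : ℝ} (hc : 0 ≤ c) (hcg : c ≤ ⟪x - y, g⟫_ℝ) :
    ‖x - (c / ‖g‖ ^ 2) • g - y‖ ^ 2 ≤ ‖x - y‖ ^ 2 - c ^ 2 / ‖g‖ ^ 2 := by
  rcases eq_or_ne g 0 with rfl | hg
  · simp
  set t := c / ‖g‖ ^ 2 with ht
  have hexpand : ‖x - t • g - y‖ ^ 2 = ‖x - y‖ ^ 2 - 2 * t * ⟪x - y, g⟫_ℝ + t ^ 2 * ‖g‖ ^ 2 := by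
    rw [sub_right_comm, norm_sub_sq_real, real_inner_smul_right, norm_smul, Real.norm_eq_abs,
      mul_pow, sq_abs]
    ring
  have hg2 : ‖g‖ ^ 2 ≠ 0 := by positivity
  have hsq : t ^ 2 * ‖g‖ ^ 2 = t * c := by rw [ht]; field_simp
  have hc2 : c ^ 2 / ‖g‖ ^ 2 = t * c := by rw [ht]; ring
  have ht0 : 0 ≤ t := by positivity
  rw [hexpand, hsq, hc2]
  linarith [mul_le_mul_of_nonneg_left hcg ht0]

theorem inner_sub_le_inner_sub_of_monotone {F : E → E}
    (hmono : ∀ x y, 0 ≤ ⟪F x - F y, x - y⟫_ℝ) {y : E} (hFy : F y = 0) (x z : E) :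
    ⟪x - z, F z⟫_ℝ ≤ ⟪x - y, F z⟫_ℝ := by
  have hzy := hmono z y
  rw [hFy, sub_zero, real_inner_comm] at hzy
  rw [← sub_add_sub_cancel x z y, inner_add_left]
  linarith

theorem norm_projection_step_sub_sq_le {s : Set E} (hs : Convex ℝ s) {P : E → E}
    (hP : ∀ v, P v ∈ s ∧ ∀ w ∈ s, ‖P v - v‖ ≤ ‖w - v‖) {F : E → E}
    (hmono : ∀ x y, 0 ≤ ⟪F x - F y, x - y⟫_ℝ) {y : E} (hys : y ∈ s) (hFy : F y = 0) {x z : E}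
    (hc : 0 ≤ ⟪x - z, F z⟫_ℝ) :
    ‖P (x - (⟪x - z, F z⟫_ℝ / ‖F z‖ ^ 2) • F z) - y‖ ^ 2 ≤
      ‖x - y‖ ^ 2 - ⟪x - z, F z⟫_ℝ ^ 2 / ‖F z‖ ^ 2 :=
  calc _ ≤ ‖x - (⟪x - z, F z⟫_ℝ / ‖F z‖ ^ 2) • F z - y‖ ^ 2 := by
        gcongr
        exact norm_sub_le_of_forall_norm_sub_le hs (hP _).1 (hP _).2 hys
    _ ≤ _ := norm_sub_div_smul_sub_sq_le hc (inner_sub_le_inner_sub_of_monotone hmono hFy x z)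

end InnerProductSpace

theorem sq_le_sq_div_sq_of_mul_le {a m c : ℝ} (ha : 0 ≤ a) (hm : 0 < m) (h : a * m ≤ c) :
    a ^ 2 ≤ c ^ 2 / m ^ 2 := by
  rw [le_div_iff₀ (by positivity), ← mul_pow]
  exact pow_le_pow_left₀ (by positivity) h 2

theorem summable_of_le_sub_succ {f u : ℕ → ℝ} (hf : ∀ k, 0 ≤ f k) (hu : ∀ k, 0 ≤ u k)
    (h : ∀ k, f k ≤ u k - u (k + 1)) : Summable f :=
  summable_of_sum_range_le hf fun m =>
    calc ∑ i ∈ Finset.range m, f i ≤ ∑ i ∈ Finset.range m, (u i - u (i + 1)) :=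
          Finset.sum_le_sum fun i _ => h i
      _ = u 0 - u m := Finset.sum_range_sub' u m
      _ ≤ u 0 := sub_le_self _ (hu m)

theorem tendsto_zero_of_tendsto_pow {ι : Type*} {l : Filter ι} {f : ι → ℝ} {n : ℕ}
    (h : Tendsto (fun i => f i ^ n) l (nhds 0)) : Tendsto f l (nhds 0) := by
  refine Metric.tendsto_nhds.mpr fun ε hε => ?_
  filter_upwards [Metric.tendsto_nhds.mp h (ε ^ n) (by positivity)] with i hi
  rw [Real.dist_0_eq_abs, abs_pow] at hi
  rw [Real.dist_0_eq_abs]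
  exact lt_of_pow_lt_pow_left₀ n hε.le hi

theorem projection_step_fejer_monotone_general (n : ℕ) (Ω : Set (EuclideanSpace ℝ (Fin n)))
    (hconv : Convex ℝ Ω)
    (F : EuclideanSpace ℝ (Fin n) → EuclideanSpace ℝ (Fin n))
    (hmono : ∀ x y, 0 ≤ (inner ℝ (F x - F y) (x - y) : ℝ))
    (xstar : EuclideanSpace ℝ (Fin n)) (hxstar : xstar ∈ Ω) (hFstar : F xstar = 0)
    (P : EuclideanSpace ℝ (Fin n) → EuclideanSpace ℝ (Fin n))
    (hP : ∀ v, P v ∈ Ω ∧ ∀ w ∈ Ω, ‖P v - v‖ ≤ ‖w - v‖)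
    (x d z : ℕ → EuclideanSpace ℝ (Fin n)) (α : ℕ → ℝ) (σ : ℝ)
    (hσ : σ ∈ Set.Ioo (0 : ℝ) 1)
    (hFz : ∀ k, F (z k) ≠ 0)
    (hls : ∀ k, σ * (α k) ^ 2 * ‖F (z k)‖ * ‖d k‖ ^ 2 ≤ (inner ℝ (F (z k)) (x k - z k) : ℝ))
    (hstep : ∀ k, x (k + 1) =
      P (x k - ((inner ℝ (x k - z k) (F (z k)) : ℝ) / ‖F (z k)‖ ^ 2) • F (z k))) :
    (∀ k, ‖x (k + 1) - xstar‖ ^ 2 ≤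
        ‖x k - xstar‖ ^ 2 - σ ^ 2 * (α k) ^ 4 * ‖d k‖ ^ 4) ∧
    (∀ k, ‖x (k + 1) - xstar‖ ≤ ‖x k - xstar‖) ∧
    Bornology.IsBounded (Set.range x) ∧
    Summable (fun k => (α k) ^ 4 * ‖d k‖ ^ 4) ∧
    Tendsto (fun k => α k * ‖d k‖) atTop (nhds 0) := by
  have hσ0 : 0 < σ := hσ.1
  have hdecrease : ∀ k, ‖x (k + 1) - xstar‖ ^ 2 ≤
      ‖x k - xstar‖ ^ 2 - σ ^ 2 * (α k) ^ 4 * ‖d k‖ ^ 4 := fun k => by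
    have hlsk := hls k
    rw [real_inner_comm] at hlsk
    have hline := sq_le_sq_div_sq_of_mul_le (a := σ * α k ^ 2 * ‖d k‖ ^ 2) (by positivity)
      (norm_pos_iff.mpr (hFz k)) (by linarith)
    rw [hstep k]
    linarith [norm_projection_step_sub_sq_le hconv hP hmono hxstar hFstar
      (le_trans (by positivity) hlsk)]
  have hdist : ∀ k, ‖x (k + 1) - xstar‖ ≤ ‖x k - xstar‖ := fun k =>
    (sq_le_sq₀ (norm_nonneg _) (norm_nonneg _)).mp <|
      (hdecrease k).trans (sub_le_self _ (by positivity))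
  have hsum : Summable (fun k => (α k) ^ 4 * ‖d k‖ ^ 4) := by
    refine (summable_mul_left_iff (pow_ne_zero 2 hσ0.ne')).mp <|
      summable_of_le_sub_succ (u := fun k => ‖x k - xstar‖ ^ 2) (fun k => by positivity)
        (fun k => by positivity) fun k => ?_
    linarith [hdecrease k]
  refine ⟨hdecrease, hdist, ?_, hsum, ?_⟩
  · refine (Metric.isBounded_closedBall (x := xstar) (r := ‖x 0 - xstar‖)).subset ?_
    rintro _ ⟨k, rfl⟩
    rw [Metric.mem_closedBall, dist_eq_norm]
    exact antitone_nat_of_succ_le (f := fun k => ‖x k - xstar‖) hdist (Nat.zero_le k)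
  · exact tendsto_zero_of_tendsto_pow (n := 4)
      (by simpa only [mul_pow] using hsum.tendsto_atTop_zero)

theorem projection_step_fejer_monotone (n : ℕ) (Ω : Set (EuclideanSpace ℝ (Fin n)))
    (hne : Ω.Nonempty) (hcl : IsClosed Ω) (hconv : Convex ℝ Ω)
    (F : EuclideanSpace ℝ (Fin n) → EuclideanSpace ℝ (Fin n))
    (hFc : Continuous F)
    (hmono : ∀ x y, 0 ≤ (inner ℝ (F x - F y) (x - y) : ℝ))
    (xstar : EuclideanSpace ℝ (Fin n)) (hxstar : xstar ∈ Ω) (hFstar : F xstar = 0)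
    (P : EuclideanSpace ℝ (Fin n) → EuclideanSpace ℝ (Fin n))
    (hP : ∀ v, P v ∈ Ω ∧ ∀ w ∈ Ω, ‖P v - v‖ ≤ ‖w - v‖)
    (x d z : ℕ → EuclideanSpace ℝ (Fin n)) (α : ℕ → ℝ) (σ : ℝ)
    (hσ : σ ∈ Set.Ioo (0 : ℝ) 1)
    (hxΩ : ∀ k, x k ∈ Ω) (hα : ∀ k, 0 < α k)
    (hz : ∀ k, z k = x k + (α k) • d k)
    (hFz : ∀ k, F (z k) ≠ 0)
    (hls : ∀ k, σ * (α k) ^ 2 * ‖F (z k)‖ * ‖d k‖ ^ 2 ≤ (inner ℝ (F (z k)) (x k - z k) : ℝ))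
    (hstep : ∀ k, x (k + 1) =
      P (x k - ((inner ℝ (x k - z k) (F (z k)) : ℝ) / ‖F (z k)‖ ^ 2) • F (z k))) :
    (∀ k, ‖x (k + 1) - xstar‖ ^ 2 ≤
        ‖x k - xstar‖ ^ 2 - σ ^ 2 * (α k) ^ 4 * ‖d k‖ ^ 4) ∧
    (∀ k, ‖x (k + 1) - xstar‖ ≤ ‖x k - xstar‖) ∧
    Bornology.IsBounded (Set.range x) ∧
    Summable (fun k => (α k) ^ 4 * ‖d k‖ ^ 4) ∧
    Tendsto (fun k => α k * ‖d k‖) atTop (nhds 0) :=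
  projection_step_fejer_monotone_general n Ω hconv F hmono xstar hxstar hFstar P hP x d z α σ hσ hFz
    hls hstep
end

section
/- Let F : ℝⁿ → ℝⁿ be continuous and let (x_k), (d_k) be bounded sequences with x_k → x̃, d_k → d̃ (along a subsequence), α_k → 0, and suppose for each k the line-search failure inequality ⟨F(x_k + (α_k/ρ) d_k), d_k⟩ > −σ (α_k/ρ) ‖F(x_k + (α_k/ρ) d_k)‖ ‖d_k‖² holds, where ρ, σ ∈ (0,1). Then ⟨F(x̃), d̃⟩ ≥ 0. -/
open Filter Topology

/-! The trial points `x k + t k • d k` converge to `x̃` because the steps `t k` vanish, so both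
sides of the failure inequality converge: the left to `⟪F x̃, d̃⟫` by continuity, the right to `0`
because of the factor `t k`. Passing to the limit in the inequality gives `0 ≤ ⟪F x̃, d̃⟫`. -/

theorem tendsto_add_smul_of_tendsto_zero {𝕜 E : Type*} [Semiring 𝕜] [TopologicalSpace 𝕜]
    [TopologicalSpace E] [AddCommMonoid E] [Module 𝕜 E] [ContinuousAdd E] [ContinuousSMul 𝕜 E]
    {ι : Type*} {l : Filter ι} {x d : ι → E} {t : ι → 𝕜} {x₀ d₀ : E}
    (hx : Tendsto x l (𝓝 x₀)) (hd : Tendsto d l (𝓝 d₀)) (ht : Tendsto t l (𝓝 0)) :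
    Tendsto (fun k => x k + t k • d k) l (𝓝 x₀) := by
  simpa using hx.add (ht.smul hd)

theorem inner_nonneg_of_tendsto_of_forall_ge {E : Type*} [NormedAddCommGroup E]
    [InnerProductSpace ℝ E] {F : E → E} {ι : Type*} {l : Filter ι} [l.NeBot]
    {x d : ι → E} {t : ι → ℝ} {x₀ d₀ : E} (c : ℝ) (hF : ContinuousAt F x₀)
    (hx : Tendsto x l (𝓝 x₀)) (hd : Tendsto d l (𝓝 d₀)) (ht : Tendsto t l (𝓝 0))
    (hfail : ∀ k, -c * t k * ‖F (x k + t k • d k)‖ * ‖d k‖ ^ 2 ≤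
      inner ℝ (F (x k + t k • d k)) (d k)) :
    0 ≤ inner ℝ (F x₀) d₀ := by
  have hFy : Tendsto (fun k => F (x k + t k • d k)) l (𝓝 (F x₀)) :=
    hF.tendsto.comp (tendsto_add_smul_of_tendsto_zero hx hd ht)
  have hlower : Tendsto (fun k => -c * t k * ‖F (x k + t k • d k)‖ * ‖d k‖ ^ 2) l (𝓝 0) := by
    simpa using ((tendsto_const_nhds (x := -c) |>.mul ht).mul hFy.norm).mul (hd.norm.pow 2)
  exact le_of_tendsto_of_tendsto' hlower (hFy.inner hd) hfail

theorem line_search_failure_limit_general (n : ℕ)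
    (F : EuclideanSpace ℝ (Fin n) → EuclideanSpace ℝ (Fin n)) (hF : Continuous F)
    (x d : ℕ → EuclideanSpace ℝ (Fin n)) (α : ℕ → ℝ)
    (xt dt : EuclideanSpace ℝ (Fin n)) (ρ σ : ℝ)
    (hx : Tendsto x atTop (nhds xt)) (hd : Tendsto d atTop (nhds dt))
    (hα : Tendsto α atTop (nhds 0))
    (hfail : ∀ k, (inner ℝ (F (x k + (α k / ρ) • d k)) (d k) : ℝ) >
      -σ * (α k / ρ) * ‖F (x k + (α k / ρ) • d k)‖ * ‖d k‖ ^ 2) :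
    0 ≤ (inner ℝ (F xt) (dt) : ℝ) := by
  have hstep : Tendsto (fun k => α k / ρ) atTop (𝓝 0) := by
    simpa using hα.div_const ρ
  exact inner_nonneg_of_tendsto_of_forall_ge σ hF.continuousAt hx hd hstep
    fun k => (hfail k).le

theorem line_search_failure_limit (n : ℕ)
    (F : EuclideanSpace ℝ (Fin n) → EuclideanSpace ℝ (Fin n)) (hF : Continuous F)
    (x d : ℕ → EuclideanSpace ℝ (Fin n)) (α : ℕ → ℝ)
    (xt dt : EuclideanSpace ℝ (Fin n)) (ρ σ : ℝ)
    (hρ : ρ ∈ Set.Ioo (0 : ℝ) 1) (hσ : σ ∈ Set.Ioo (0 : ℝ) 1)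
    (hx : Tendsto x atTop (nhds xt)) (hd : Tendsto d atTop (nhds dt))
    (hα : Tendsto α atTop (nhds 0))
    (hfail : ∀ k, (inner ℝ (F (x k + (α k / ρ) • d k)) (d k) : ℝ) >
      -σ * (α k / ρ) * ‖F (x k + (α k / ρ) • d k)‖ * ‖d k‖ ^ 2) :
    0 ≤ (inner ℝ (F xt) (dt) : ℝ) :=
  line_search_failure_limit_general n F hF x d α xt dt ρ σ hx hd hα hfail
end
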